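/- arXiv:1103.3135 — 11 statements merged into one kernel-verified Lean document; each statement's English description precedes it below -/
import Mathlib

section
/- Let R and S be commutative rings and let f : R →+* S be a ring homomorphism making S a flat R-module. Consider the adjunction F ⊣ G where F = S ⊗_R − : ModuleCat R ⥤ ModuleCat S is extension of scalars along f and G = restriction of scalars along f, and let T be the comonad on ModuleCat S induced by this adjunction. Then the comparison functor Φ : ModuleCat R ⥤ Coalg(T) is an equivalence of categories if and only if S is a faithfully flat R-module. (This is the affine case of the paper's Theorem on abelian descent: for a flat morphism p : X → S of schemes, qcoh(X)/p ≃ qcoh(S) iff p is strictly flat.) -/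
/-!
If `S` is faithfully flat over `R`, then `S ⊗_R -` preserves finite limits and reflects
isomorphisms, so by the comonadicity theorem the comparison functor is an equivalence.
Conversely, the comparison functor followed by the forgetful functor of coalgebras is `S ⊗_R -`;
if the comparison is an equivalence, `S ⊗_R -` is therefore faithful, and a faithful functor
preserving zero morphisms can only send zero objects to zero objects: `S ⊗_R N = 0` forces
`N = 0`, which together with flatness is faithful flatness.
-/

open CategoryTheory

universe u

namespace CategoryTheory.Limits

theorem IsZero.of_faithful_of_isZero {C D : Type*} [Category C] [Category D]
    [HasZeroMorphisms C] [HasZeroMorphisms D] (F : C ⥤ D) [F.PreservesZeroMorphisms]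
    [F.Faithful] {X : C} (hX : IsZero (F.obj X)) : IsZero X := by
  rw [IsZero.iff_id_eq_zero]
  exact F.zero_of_map_zero _ (by rw [F.map_id]; exact hX.eq_of_src _ _)

end CategoryTheory.Limits

namespace ModuleCat

open Limits

theorem faithfullyFlat_of_flat_of_faithful_extendScalars {R S : Type u} [CommRing R]
    [CommRing S] (f : R →+* S) (hf : f.Flat) [(extendScalars.{_, _, u} f).Faithful] :
    f.FaithfullyFlat := by
  algebraize [f]
  refine (Module.FaithfullyFlat.iff_flat_and_lTensor_reflects_triviality R S).mpr
    ⟨hf, fun N _ _ hN ↦ ?_⟩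
  have hFN : IsZero ((extendScalars f).obj (of R N)) := isZero_iff_subsingleton.mpr hN
  exact isZero_iff_subsingleton.mp (IsZero.of_faithful_of_isZero (extendScalars f) hFN)

end ModuleCat

/-- Affine case of abelian cohomological descent: for a ring homomorphism `f : R →+* S`
making `S` a flat `R`-module, the comparison functor from `ModuleCat R` to the category of
coalgebras over the comonad on `ModuleCat S` induced by the extension/restriction of scalars
adjunction is an equivalence iff `S` is a faithfully flat `R`-module. -/
theorem comparison_isEquivalence_iff_faithfullyFlat
    {R S : Type u} [CommRing R] [CommRing S] (f : R →+* S)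
    (hflat : @Module.Flat R S _ _ f.toModule) :
    (Comonad.comparison (ModuleCat.extendRestrictScalarsAdj.{u, u, u} f)).IsEquivalence ↔
      @Module.FaithfullyFlat R S _ _ f.toModule := by
  constructor
  · intro _
    have : (ModuleCat.extendScalars.{u, u, u} f).Faithful :=
      .of_iso (Comonad.comparisonForget (ModuleCat.extendRestrictScalarsAdj f))
    exact ModuleCat.faithfullyFlat_of_flat_of_faithful_extendScalars f hflat
  · intro hff
    exact (comonadicExtendScalars hff).eqv
end

section
/- Let F ⊣ G be an adjunction with F : B ⥤ C and unit η : 𝟭_B ⟶ F ⋙ G, and suppose the category B is idempotent complete. If η admits a natural retraction, i.e., there exists a natural transformation σ : F ⋙ G ⟶ 𝟭_B with η ≫ σ equal to the identity natural transformation of 𝟭_B, then the comparison functor Φ : B ⥤ Coalg(T) to the Eilenberg–Moore category of coalgebras over the induced comonad T on C is an equivalence of categories. -/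
open CategoryTheory

universe v₁ v₂ u₁ u₂

/-!
Since the unit is naturally split mono, `F` is faithful, and a coalgebra map `k : F H ⟶ F H'` is
`F` of `η ≫ G k ≫ σ`; so the comparison functor `Φ` is fully faithful. A coalgebra `(A, a)` is a
retract, among coalgebras, of `Φ (G A)`, via `a` and `F (G a ≫ σ) ≫ ε`. The essential image of a
fully faithful functor out of an idempotent complete category is closed under retracts, so `Φ` is
essentially surjective.
-/

namespace CategoryTheory

open Category

/-- Split the idempotent of `X` that `Φ` sends to `r ≫ i`. -/
theorem Functor.mem_essImage_of_retract {B D : Type*} [Category* B] [Category* D]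
    [IsIdempotentComplete B] (Φ : B ⥤ D) [Φ.Full] [Φ.Faithful] {X : B} {Y : D}
    (h : Retract Y (Φ.obj X)) : Φ.essImage Y := by
  have he : Φ.preimage (h.r ≫ h.i) ≫ Φ.preimage (h.r ≫ h.i) = Φ.preimage (h.r ≫ h.i) :=
    Φ.map_injective (by simp)
  obtain ⟨P, i, r, hir, hri⟩ := IsIdempotentComplete.idempotents_split X _ he
  have hri' : Φ.map r ≫ Φ.map i = h.r ≫ h.i := by rw [← Φ.map_comp, hri, Φ.map_preimage]
  refine ⟨P, ⟨⟨Φ.map i ≫ h.r, h.i ≫ Φ.map r, ?_, ?_⟩⟩⟩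
  · simp [← reassoc_of% hri', ← Φ.map_comp, hir]
  · simp [reassoc_of% hri']

namespace Adjunction

variable {B : Type u₁} [Category.{v₁} B] {C : Type u₂} [Category.{v₂} C]
  {F : B ⥤ C} {G : C ⥤ B} (adj : F ⊣ G) (σ : F ⋙ G ⟶ 𝟭 B)

theorem unit_app_comp_app (hσ : adj.unit ≫ σ = 𝟙 _) (X : B) : adj.unit.app X ≫ σ.app X = 𝟙 X :=
  NatTrans.congr_app hσ X

theorem map_comp_app_comp_map_eq_of_coassoc {A : C} {a : A ⟶ F.obj (G.obj A)}
    (ha : a ≫ F.map (adj.unit.app (G.obj A)) = a ≫ F.map (G.map a)) :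
    G.map a ≫ σ.app (G.obj A) ≫ G.map a = G.map a ≫ σ.app (G.obj A) ≫ adj.unit.app (G.obj A) := by
  have hσa := σ.naturality (G.map a)
  have hση := σ.naturality (adj.unit.app (G.obj A))
  dsimp at hσa hση
  rw [← hσa, ← G.map_comp_assoc, ← ha, G.map_comp_assoc, hση]

theorem map_unit_comp_map_map_eq_of_coassoc {A : C} {a : A ⟶ F.obj (G.obj A)}
    (ha : a ≫ F.map (adj.unit.app (G.obj A)) = a ≫ F.map (G.map a)) :
    F.map (adj.unit.app (G.obj A)) ≫
        F.map (G.map (F.map (G.map a ≫ σ.app (G.obj A)) ≫ adj.counit.app A)) =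
      (F.map (G.map a ≫ σ.app (G.obj A)) ≫ adj.counit.app A) ≫ a := by
  have key := map_comp_app_comp_map_eq_of_coassoc adj σ ha
  calc _ = F.map (G.map a ≫ σ.app (G.obj A)) := by
        dsimp only [Functor.id_obj, Functor.comp_obj]
        rw [← F.map_comp, G.map_comp, adj.unit_naturality_assoc, adj.right_triangle_components,
          comp_id]
    _ = _ := by
        dsimp only [Functor.id_obj, Functor.comp_obj] at key ⊢
        rw [assoc, ← adj.counit_naturality, ← F.map_comp_assoc, assoc, key]
        simp

theorem comp_map_map_comp_app_eq_of_coassoc (hσ : adj.unit ≫ σ = 𝟙 _) {A : C}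
    {a : A ⟶ F.obj (G.obj A)} (ha : a ≫ F.map (adj.unit.app (G.obj A)) = a ≫ F.map (G.map a)) :
    a ≫ F.map (G.map a ≫ σ.app (G.obj A)) = a := by
  rw [F.map_comp, ← reassoc_of% ha]
  simp only [← F.map_comp, unit_app_comp_app adj σ hσ]
  simp

def retractComparisonObj (hσ : adj.unit ≫ σ = 𝟙 _) (X : adj.toComonad.Coalgebra) :
    Retract X ((Comonad.comparison adj).obj (G.obj X.A)) where
  i := ⟨X.a, X.coassoc.symm⟩
  r :=
    { f := F.map (G.map X.a ≫ σ.app _) ≫ adj.counit.app X.A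
      h := map_unit_comp_map_map_eq_of_coassoc adj σ X.coassoc }
  retract := by
    ext
    exact (assoc _ _ _).symm.trans
      ((comp_map_map_comp_app_eq_of_coassoc adj σ hσ X.coassoc =≫ _).trans X.counit)

theorem faithful_of_unit_retraction (hσ : adj.unit ≫ σ = 𝟙 _) : F.Faithful :=
  have (X : B) : IsSplitMono (adj.unit.app X) := .mk' ⟨σ.app X, unit_app_comp_app adj σ hσ X⟩
  adj.faithful_L_of_mono_unit_app

theorem map_unit_comp_map_comp_app_eq (hσ : adj.unit ≫ σ = 𝟙 _) {H H' : B}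
    {f : F.obj H ⟶ F.obj H'}
    (hf : F.map (adj.unit.app H) ≫ F.map (G.map f) = f ≫ F.map (adj.unit.app H')) :
    F.map (adj.unit.app H ≫ G.map f ≫ σ.app H') = f := by
  rw [F.map_comp, F.map_comp, reassoc_of% hf]
  simp only [← F.map_comp, unit_app_comp_app adj σ hσ]
  simp

theorem full_comparison_of_unit_retraction (hσ : adj.unit ≫ σ = 𝟙 _) :
    (Comonad.comparison adj).Full where
  map_surjective k := ⟨_, Comonad.Coalgebra.Hom.ext (map_unit_comp_map_comp_app_eq adj σ hσ k.h)⟩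

theorem essSurj_comparison_of_unit_retraction [IsIdempotentComplete B]
    (hσ : adj.unit ≫ σ = 𝟙 _) : (Comonad.comparison adj).EssSurj :=
  have := adj.faithful_of_unit_retraction σ hσ
  have := adj.full_comparison_of_unit_retraction σ hσ
  ⟨fun X => (Comonad.comparison adj).mem_essImage_of_retract (adj.retractComparisonObj σ hσ X)⟩

end Adjunction

end CategoryTheory

/-- If `B` is idempotent complete and the unit of an adjunction `F ⊣ G` admits a natural
retraction, then the comparison functor to the Eilenberg–Moore category of coalgebras over
the induced comonad is an equivalence. -/
theorem comparison_isEquivalence_of_unit_split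
    {B : Type u₁} [Category.{v₁} B] {C : Type u₂} [Category.{v₂} C]
    [IsIdempotentComplete B]
    (F : B ⥤ C) (G : C ⥤ B) (adj : F ⊣ G)
    (σ : F ⋙ G ⟶ 𝟭 B) (hσ : adj.unit ≫ σ = 𝟙 (𝟭 B)) :
    (Comonad.comparison adj).IsEquivalence := by
  have := adj.faithful_of_unit_retraction σ hσ
  have := adj.full_comparison_of_unit_retraction σ hσ
  have := adj.essSurj_comparison_of_unit_retraction σ hσ
  exact { }
end

section
/- Let B be a pretriangulated category, C a category, and F ⊣ G an adjunction with F : B ⥤ C and unit η. Then the comparison functor Φ : B ⥤ Coalg(T) to the coalgebras over the induced comonad T on C is fully faithful if and only if for every object H of B the unit morphism η_H : H ⟶ G(F(H)) is a split monomorphism (admits a retraction). -/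
/-!
The comparison functor `Φ` followed by the forgetful functor of coalgebras is `F`, so `Φ` is
faithful exactly when `F` is, and a faithful left adjoint has monic unit components; in a
pretriangulated category every monomorphism splits. Conversely, a retraction `r_H'` of
`η_H'` turns a coalgebra morphism `g : Φ H ⟶ Φ H'` into the preimage `η_H ≫ G(g) ≫ r_H'`.
-/

open CategoryTheory CategoryTheory.Limits CategoryTheory.Pretriangulated

universe v₁ v₂ u₁ u₂

namespace CategoryTheory.Comonad

variable {C : Type u₁} [Category.{v₁} C] {D : Type u₂} [Category.{v₂} D]
  {L : C ⥤ D} {R : D ⥤ C} (h : L ⊣ R)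

lemma comparison_faithful_iff : (comparison h).Faithful ↔ L.Faithful :=
  ⟨fun _ => Functor.Faithful.of_iso (comparisonForget h), fun _ => inferInstance⟩

lemma comparison_full_of_isSplitMono_unit (hsplit : ∀ X, IsSplitMono (h.unit.app X)) :
    (comparison h).Full where
  map_surjective {X Y} g := by
    obtain ⟨⟨⟨r, hr⟩⟩⟩ := hsplit Y
    have preimage_map : ∀ f : L.obj X ⟶ L.obj Y,
        L.map (h.unit.app X) ≫ L.map (R.map f) = f ≫ L.map (h.unit.app Y) →
          L.map (h.unit.app X ≫ R.map f ≫ r) = f := by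
      intro f hf
      rw [L.map_comp, L.map_comp, ← Category.assoc, hf, Category.assoc, ← L.map_comp, hr]
      exact (f ≫= L.map_id Y).trans (Category.comp_id f)
    exact ⟨h.unit.app X ≫ R.map g.f ≫ r, Coalgebra.Hom.ext (preimage_map g.f g.h)⟩

end CategoryTheory.Comonad

/-- For an adjunction `F ⊣ G` with `F` defined on a pretriangulated category `B`, the
comparison functor to the coalgebras over the induced comonad is fully faithful iff
every unit morphism `η_H : H ⟶ G(F(H))` is a split monomorphism. -/
theorem comparison_fullyFaithful_iff_unit_isSplitMono
    {B : Type u₁} [Category.{v₁} B] [HasZeroObject B] [HasShift B ℤ] [Preadditive B]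
    [∀ n : ℤ, (shiftFunctor B n).Additive] [Pretriangulated B]
    {C : Type u₂} [Category.{v₂} C]
    (F : B ⥤ C) (G : C ⥤ B) (adj : F ⊣ G) :
    ((Comonad.comparison adj).Full ∧ (Comonad.comparison adj).Faithful) ↔
      ∀ H : B, IsSplitMono (adj.unit.app H) := by
  rw [Comonad.comparison_faithful_iff]
  constructor
  · rintro ⟨-, _⟩ H
    exact isSplitMono_of_mono _
  · intro hsplit
    have : F.Faithful := adj.faithful_L_of_mono_unit_app
    exact ⟨Comonad.comparison_full_of_isSplitMono_unit adj hsplit, this⟩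
end

section
/- Let B and C be abelian categories and let F ⊣ G be an adjunction with F : B ⥤ C additive and unit η. Then the comparison functor Φ : B ⥤ Coalg(T) to the coalgebras over the induced comonad T on C is fully faithful if and only if for every object H of B the unit morphism η_H : H ⟶ G(F(H)) is a monomorphism. -/
/-!
The comparison functor is `F` followed by the (faithful) forgetful functor, so it is faithful
iff `F` is, iff every unit component is mono. For fullness, the transpose `ψ = η_{H₁} ≫ G α` of a
coalgebra morphism `α : F H₁ ⟶ F H₂` equalizes `G F η_{H₂}` and `η_{G F H₂}`. Since the units are
mono, this forces `ψ` to vanish on `coker η_{H₂}`, so in an abelian category `ψ` factors through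
`η_{H₂}`, and the factor is a preimage of `α`.
-/

open CategoryTheory CategoryTheory.Limits

universe v₁ v₂ u₁ u₂

namespace CategoryTheory

variable {B : Type u₁} [Category.{v₁} B] {C : Type u₂} [Category.{v₂} C]

lemma Comonad.comparison_faithful_iff_s3 {F : B ⥤ C} {G : C ⥤ B} (adj : F ⊣ G) :
    (Comonad.comparison adj).Faithful ↔ F.Faithful :=
  ⟨fun _ => Functor.Faithful.of_iso (Comonad.comparisonForget adj),
    fun _ => Comonad.comparison_faithful_of_faithful adj⟩

lemma Adjunction.faithful_iff_mono_unit_app {F : B ⥤ C} {G : C ⥤ B} (adj : F ⊣ G) :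
    F.Faithful ↔ ∀ H : B, Mono (adj.unit.app H) :=
  ⟨fun _ => adj.unit_mono_of_L_faithful, fun _ => adj.faithful_L_of_mono_unit_app⟩

/-- `hf` says that `f` is a morphism of coalgebras between the images of `H₁` and `H₂`. -/
lemma Adjunction.unit_comp_map_comp_map_unit {F : B ⥤ C} {G : C ⥤ B} (adj : F ⊣ G)
    {H₁ H₂ : B} {f : F.obj H₁ ⟶ F.obj H₂}
    (hf : F.map (adj.unit.app H₁) ≫ F.map (G.map f) = f ≫ F.map (adj.unit.app H₂)) :
    (adj.unit.app H₁ ≫ G.map f) ≫ G.map (F.map (adj.unit.app H₂)) =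
      (adj.unit.app H₁ ≫ G.map f) ≫ adj.unit.app (G.obj (F.obj H₂)) :=
  calc (adj.unit.app H₁ ≫ G.map f) ≫ G.map (F.map (adj.unit.app H₂))
      = adj.unit.app H₁ ≫ G.map (F.map (adj.unit.app H₁)) ≫ G.map (F.map (G.map f)) := by
        rw [Category.assoc, ← G.map_comp, ← hf, G.map_comp]
    _ = adj.unit.app H₁ ≫ adj.unit.app (G.obj (F.obj H₁)) ≫ G.map (F.map (G.map f)) :=
        adj.unit_naturality_assoc (adj.unit.app H₁) _
    _ = (adj.unit.app H₁ ≫ G.map f) ≫ adj.unit.app (G.obj (F.obj H₂)) := by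
        rw [Category.assoc]
        exact congrArg (adj.unit.app H₁ ≫ ·) (adj.unit_naturality (G.map f))

/-- After composing with the mono `η_Q`, `Q = coker η_H`, the left side becomes
`ψ ≫ T (η_H ≫ π) = 0`. -/
lemma NatTrans.comp_cokernel_π_eq_zero [HasZeroMorphisms B] {T : B ⥤ B}
    [T.PreservesZeroMorphisms] (η : 𝟭 B ⟶ T) [∀ X, Mono (η.app X)] {X H : B}
    [HasCokernel (η.app H)] {ψ : X ⟶ T.obj H}
    (hψ : ψ ≫ T.map (η.app H) = ψ ≫ η.app (T.obj H)) :
    ψ ≫ cokernel.π (η.app H) = 0 := by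
  rw [← cancel_mono (η.app (cokernel (η.app H))), Category.assoc, zero_comp]
  have hnat := η.naturality (cokernel.π (η.app H))
  dsimp at hnat
  rw [hnat, ← Category.assoc, ← hψ, Category.assoc, ← T.map_comp, cokernel.condition,
    T.map_zero, comp_zero]

lemma Comonad.comparison_full_of_mono_unit_app [Abelian B] [HasZeroMorphisms C]
    {F : B ⥤ C} {G : C ⥤ B} (adj : F ⊣ G) [∀ H, Mono (adj.unit.app H)] :
    (Comonad.comparison adj).Full where
  map_surjective {H₁ H₂} α := by
    have := adj.isLeftAdjoint
    have := adj.isRightAdjoint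
    let f : F.obj H₁ ⟶ F.obj H₂ := α.f
    have hψ := NatTrans.comp_cokernel_π_eq_zero (T := F ⋙ G) adj.unit
      (adj.unit_comp_map_comp_map_unit (f := f) α.h)
    refine ⟨Abelian.monoLift _ _ hψ, Comonad.Coalgebra.Hom.ext ?_⟩
    change F.map _ = f
    apply (adj.homEquiv _ _).injective
    rw [adj.homEquiv_unit, adj.homEquiv_unit, adj.unit_naturality]
    exact Abelian.monoLift_comp _ _ hψ

end CategoryTheory

theorem comparison_fullyFaithful_iff_unit_mono_general
    {B : Type u₁} [Category.{v₁} B] [Abelian B]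
    {C : Type u₂} [Category.{v₂} C] [Abelian C]
    (F : B ⥤ C) (G : C ⥤ B) (adj : F ⊣ G) :
    ((Comonad.comparison adj).Full ∧ (Comonad.comparison adj).Faithful) ↔
      ∀ H : B, Mono (adj.unit.app H) := by
  rw [Comonad.comparison_faithful_iff_s3, adj.faithful_iff_mono_unit_app]
  exact ⟨And.right, fun h => ⟨Comonad.comparison_full_of_mono_unit_app adj, h⟩⟩

/-- For an adjunction `F ⊣ G` between abelian categories with `F` additive, the comparison
functor to the coalgebras over the induced comonad is fully faithful iff every unit morphism
`η_H : H ⟶ G(F(H))` is a monomorphism. -/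
theorem comparison_fullyFaithful_iff_unit_mono
    {B : Type u₁} [Category.{v₁} B] [Abelian B]
    {C : Type u₂} [Category.{v₂} C] [Abelian C]
    (F : B ⥤ C) [F.Additive] (G : C ⥤ B) (adj : F ⊣ G) :
    ((Comonad.comparison adj).Full ∧ (Comonad.comparison adj).Faithful) ↔
      ∀ H : B, Mono (adj.unit.app H) :=
  comparison_fullyFaithful_iff_unit_mono_general F G adj
end

section
/- Let B and C be pretriangulated categories such that B is idempotent complete and every triangle of B that is a direct summand (retract) of a distinguished triangle is itself distinguished. Let F ⊣ G be an adjunction in which both F : B ⥤ C and G : C ⥤ B are exact (triangulated) functors, and suppose the unit η : 𝟭_B ⟶ F ⋙ G admits a natural retraction σ : F ⋙ G ⟶ 𝟭_B with η ≫ σ = 𝟙. Then a triangle X → Y → Z → X⟦1⟧ in B is distinguished if and only if its image under F is a distinguished triangle in C; in other words, F reflects distinguished triangles. -/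
/-!
Since the unit `η : 𝟭 B ⟶ F ⋙ G` is split by `σ`, a morphism `φ : F X ⟶ F Y` can be brought back
to `η_X ≫ G φ ≫ σ_Y : X ⟶ Y`; this sends `F f` to `f` and commutes with composition by
morphisms of `B`, so `F` reflects isomorphisms. Given `T` with `F T` distinguished, complete `T.mor₁` to a distinguished triangle
`T₀`. The comparison `F T ⟶ F T₀` that is the identity on the first two objects, brought back to
`B`, is a morphism of triangles `T ⟶ T₀`; its image under `F` is an isomorphism by the five lemma
in `C`, so it is an isomorphism and `T` is distinguished.
-/

open CategoryTheory CategoryTheory.Limits CategoryTheory.Pretriangulated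

universe v₁ v₂ u₁ u₂

namespace CategoryTheory

namespace Functor

variable {B : Type u₁} [Category.{v₁} B] {C : Type u₂} [Category.{v₂} C] [HasShift B ℤ]
  [HasShift C ℤ] [HasZeroObject C] [Preadditive C] [∀ n : ℤ, (shiftFunctor C n).Additive]
  [Pretriangulated C] (F : B ⥤ C) [F.CommShift ℤ]

lemma exists_hom₃_of_map_distinguished {T T' : Triangle B}
    (hT : F.mapTriangle.obj T ∈ distTriang C) (hT' : F.mapTriangle.obj T' ∈ distTriang C)
    (a : T.obj₁ ⟶ T'.obj₁) (b : T.obj₂ ⟶ T'.obj₂) (comm : T.mor₁ ≫ b = a ≫ T'.mor₁) :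
    ∃ c : F.obj T.obj₃ ⟶ F.obj T'.obj₃, F.map T.mor₂ ≫ c = F.map (b ≫ T'.mor₂) ∧
      c ≫ F.map T'.mor₃ = F.map (T.mor₃ ≫ a⟦(1 : ℤ)⟧') := by
  obtain ⟨c, hc₂, hc₃⟩ : ∃ c : F.obj T.obj₃ ⟶ F.obj T'.obj₃,
      F.map T.mor₂ ≫ c = F.map b ≫ F.map T'.mor₂ ∧
      (F.map T.mor₃ ≫ (F.commShiftIso (1 : ℤ)).hom.app T.obj₁) ≫ (F.map a)⟦(1 : ℤ)⟧' =
        c ≫ F.map T'.mor₃ ≫ (F.commShiftIso (1 : ℤ)).hom.app T'.obj₁ :=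
    complete_distinguished_triangle_morphism _ _ hT hT' (F.map a) (F.map b)
      ((F.map_comp _ _).symm.trans ((congrArg F.map comm).trans (F.map_comp _ _)))
  refine ⟨c, hc₂.trans (F.map_comp _ _).symm, ?_⟩
  rw [← cancel_mono ((F.commShiftIso (1 : ℤ)).hom.app T'.obj₁)]
  simpa using hc₃.symm

end Functor

namespace Retract

variable {B : Type u₁} [Category.{v₁} B] {C : Type u₂} [Category.{v₂} C]
  {F : B ⥤ C} {G : C ⥤ B}

def transfer (h : Retract (𝟭 B) (F ⋙ G)) {X Y : B} (φ : F.obj X ⟶ F.obj Y) : X ⟶ Y :=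
  h.i.app X ≫ G.map φ ≫ h.r.app Y

@[simp]
lemma retract_app (h : Retract (𝟭 B) (F ⋙ G)) (X : B) : h.i.app X ≫ h.r.app X = 𝟙 X :=
  NatTrans.congr_app h.retract X

@[simp]
lemma transfer_map (h : Retract (𝟭 B) (F ⋙ G)) {X Y : B} (f : X ⟶ Y) :
    h.transfer (F.map f) = f := by
  simpa [transfer] using (h.i.naturality_assoc f (h.r.app Y)).symm

lemma comp_transfer (h : Retract (𝟭 B) (F ⋙ G)) {X Y Z : B} (f : X ⟶ Y)
    (φ : F.obj Y ⟶ F.obj Z) :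
    f ≫ h.transfer φ = h.transfer (F.map f ≫ φ) := by
  simpa [transfer] using h.i.naturality_assoc f (G.map φ ≫ h.r.app Z)

lemma transfer_comp (h : Retract (𝟭 B) (F ⋙ G)) {X Y Z : B} (φ : F.obj X ⟶ F.obj Y)
    (g : Y ⟶ Z) :
    h.transfer φ ≫ g = h.transfer (φ ≫ F.map g) := by
  simp only [transfer, Functor.map_comp, Category.assoc]
  congr 2
  exact (h.r.naturality g).symm

lemma reflectsIsomorphisms_left (h : Retract (𝟭 B) (F ⋙ G)) : F.ReflectsIsomorphisms where
  reflects f _ := ⟨h.transfer (inv (F.map f)),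
    by rw [h.comp_transfer, IsIso.hom_inv_id, ← F.map_id, transfer_map],
    by rw [h.transfer_comp, IsIso.inv_hom_id, ← F.map_id, transfer_map]⟩

variable [HasZeroObject B] [HasShift B ℤ] [Preadditive B] [∀ n : ℤ, (shiftFunctor B n).Additive]
  [Pretriangulated B] [HasZeroObject C] [HasShift C ℤ] [Preadditive C]
  [∀ n : ℤ, (shiftFunctor C n).Additive] [Pretriangulated C] [F.CommShift ℤ] [F.IsTriangulated]

lemma distinguished_of_map_distinguished (h : Retract (𝟭 B) (F ⋙ G)) {T : Triangle B}
    (hT : F.mapTriangle.obj T ∈ distTriang C) : T ∈ distTriang B := by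
  obtain ⟨Z, g, k, hT₀⟩ := distinguished_cocone_triangle T.mor₁
  have hFT₀ := F.map_distinguished _ hT₀
  obtain ⟨c, hc₂, hc₃⟩ := F.exists_hom₃_of_map_distinguished hT hFT₀ (𝟙 _) (𝟙 _)
    ((Category.comp_id _).trans (Category.id_comp _).symm)
  let ψ : T ⟶ Triangle.mk T.mor₁ g k := Triangle.homMk _ _ (𝟙 _) (𝟙 _) (h.transfer c)
    ((Category.comp_id _).trans (Category.id_comp _).symm)
    (by rw [h.comp_transfer, hc₂, transfer_map]) (by rw [h.transfer_comp, hc₃, transfer_map])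
  have : IsIso (F.map ψ.hom₃) := isIso₃_of_isIso₁₂ (F.mapTriangle.map ψ) hT hFT₀
    (inferInstanceAs (IsIso (F.map (𝟙 _)))) (inferInstanceAs (IsIso (F.map (𝟙 _))))
  have := h.reflectsIsomorphisms_left
  have : IsIso ψ.hom₃ := isIso_of_reflects_iso _ F
  have : IsIso ψ := Triangle.isIso_of_isIsos _
    (inferInstanceAs (IsIso (𝟙 _))) (inferInstanceAs (IsIso (𝟙 _))) this
  exact isomorphic_distinguished _ hT₀ _ (asIso ψ)

end Retract

end CategoryTheory

/-- Let `B`, `C` be pretriangulated, `B` idempotent complete and such that any retract (direct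
summand) of a distinguished triangle is distinguished. If `F ⊣ G` is an adjunction of exact
(triangulated) functors whose unit admits a natural retraction, then a triangle in `B` is
distinguished iff its image under `F` is distinguished in `C`. -/
theorem distinguished_iff_map_distinguished_of_unit_split
    {B : Type u₁} [Category.{v₁} B] [HasZeroObject B] [HasShift B ℤ] [Preadditive B]
    [∀ n : ℤ, (shiftFunctor B n).Additive] [Pretriangulated B]
    {C : Type u₂} [Category.{v₂} C] [HasZeroObject C] [HasShift C ℤ] [Preadditive C]
    [∀ n : ℤ, (shiftFunctor C n).Additive] [Pretriangulated C]
    [IsIdempotentComplete B]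
    (hretract : ∀ (T T' : Triangle B) (i : T ⟶ T') (r : T' ⟶ T),
      i ≫ r = 𝟙 T → T' ∈ (distTriang B) → T ∈ distTriang B)
    (F : B ⥤ C) [F.CommShift ℤ] [F.IsTriangulated]
    (G : C ⥤ B) [G.CommShift ℤ] [G.IsTriangulated]
    (adj : F ⊣ G)
    (σ : F ⋙ G ⟶ 𝟭 B) (hσ : adj.unit ≫ σ = 𝟙 (𝟭 B)) :
    ∀ T : Triangle B, T ∈ (distTriang B) ↔ F.mapTriangle.obj T ∈ distTriang C := fun T =>
  ⟨F.map_distinguished T,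
    (⟨adj.unit, σ, hσ⟩ : Retract (𝟭 B) (F ⋙ G)).distinguished_of_map_distinguished⟩
end

section
/- (Beck's theorem, fully faithful part.) Let F ⊣ G be an adjunction with F : B ⥤ C and unit η. Then the comparison functor Φ : B ⥤ Coalg(T) to the coalgebras over the induced comonad T on C is fully faithful if and only if for every object H of B the unit morphism η_H : H ⟶ G(F(H)) is a regular monomorphism, i.e., an equalizer of some parallel pair of morphisms. -/
open CategoryTheory CategoryTheory.Limits

universe v₁ v₂ u₁ u₂

/-!
Transposing along `F ⊣ G` identifies coalgebra maps `Φ H ⟶ Φ H'` with maps `H ⟶ G F H'` that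
equalize `G F η_{H'}` and `η_{G F H'}`, and turns `Φ.map` into postcomposition with `η_{H'}`.
Hence `Φ` is fully faithful iff each `η_{H'}` is the equalizer of this canonical pair. Conversely a
regular mono `η_H` is such an equalizer: once all units are mono, `F` is faithful, and a map `f`
equalizing the canonical pair has `F f` factoring through `F η_H`, so `f` equalizes every pair
that `η_H` equalizes.
-/

namespace CategoryTheory

theorem Functor.full_and_faithful_iff_map_bijective {B D : Type*} [Category B] [Category D]
    (P : B ⥤ D) : (P.Full ∧ P.Faithful) ↔ ∀ X Y : B, Function.Bijective (P.map : (X ⟶ Y) → _) := by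
  rw [← Functor.FullyFaithful.nonempty_iff_map_bijective]
  exact ⟨fun ⟨_, _⟩ => ⟨.ofFullyFaithful P⟩, fun ⟨h⟩ => ⟨h.full, h.faithful⟩⟩

namespace Limits

variable {C : Type*} [Category C]

theorem Fork.nonempty_isLimit_iff_bijective {X Y : C} {f g : X ⟶ Y} (t : Fork f g) :
    Nonempty (IsLimit t) ↔ ∀ Z : C, Function.Bijective
      (fun k : Z ⟶ t.pt => (⟨k ≫ t.ι, by simp [t.condition]⟩ : {h : Z ⟶ X // h ≫ f = h ≫ g})) := by
  refine ⟨fun ⟨ht⟩ Z => (Fork.IsLimit.homIso ht Z).bijective, fun h => ⟨?_⟩⟩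
  refine Fork.IsLimit.ofExistsUnique fun s => ?_
  obtain ⟨l, hl⟩ := (h s.pt).surjective ⟨s.ι, s.condition⟩
  refine ⟨l, congrArg Subtype.val hl, fun m hm => (h s.pt).injective (Subtype.ext ?_)⟩
  exact hm.trans (congrArg Subtype.val hl).symm

end Limits

namespace Adjunction

variable {B : Type u₁} [Category.{v₁} B] {C : Type u₂} [Category.{v₂} C]
  {F : B ⥤ C} {G : C ⥤ B} (adj : F ⊣ G)

def unitFork (H : B) : Fork (G.map (F.map (adj.unit.app H))) (adj.unit.app (G.obj (F.obj H))) :=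
  Fork.ofι (adj.unit.app H) (adj.unit.naturality (adj.unit.app H)).symm

theorem isCoalgebraHom_iff {H H' : B} (φ : F.obj H ⟶ F.obj H') :
    F.map (adj.unit.app H) ≫ F.map (G.map φ) = φ ≫ F.map (adj.unit.app H') ↔
      adj.homEquiv _ _ φ ≫ G.map (F.map (adj.unit.app H')) =
        adj.homEquiv _ _ φ ≫ adj.unit.app (G.obj (F.obj H')) := by
  rw [← (adj.homEquiv _ _).apply_eq_iff_eq, eq_comm]
  simp [homEquiv_unit]

def comparisonHomEquiv (H H' : B) :
    ((Comonad.comparison adj).obj H ⟶ (Comonad.comparison adj).obj H') ≃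
      {f : H ⟶ G.obj (F.obj H') //
        f ≫ G.map (F.map (adj.unit.app H')) = f ≫ adj.unit.app (G.obj (F.obj H'))} where
  toFun k := ⟨adj.homEquiv H (F.obj H') k.f, (adj.isCoalgebraHom_iff k.f).1 k.h⟩
  invFun f := ⟨(adj.homEquiv H (F.obj H')).symm f.1,
    (adj.isCoalgebraHom_iff _).2 (by simpa only [Equiv.apply_symm_apply] using f.2)⟩
  left_inv k := by ext; exact Equiv.symm_apply_apply _ _
  right_inv f := Subtype.ext (Equiv.apply_symm_apply _ _)

theorem comparisonHomEquiv_map {H H' : B} (g : H ⟶ H') :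
    adj.comparisonHomEquiv H H' ((Comonad.comparison adj).map g) =
      ⟨g ≫ adj.unit.app H', by simp⟩ := by
  ext; simp [comparisonHomEquiv, homEquiv_unit]

theorem comparison_map_bijective_iff (H' : B) :
    (∀ H, Function.Bijective ((Comonad.comparison adj).map : (H ⟶ H') → _)) ↔
      Nonempty (IsLimit (adj.unitFork H')) := by
  rw [Fork.nonempty_isLimit_iff_bijective]
  refine forall_congr' fun H => ?_
  rw [← (adj.comparisonHomEquiv H H').comp_bijective]
  exact Iff.of_eq (congrArg _ (funext adj.comparisonHomEquiv_map))

theorem map_eq_map_comp_counit_comp_map_unit {W H : B} (f : W ⟶ G.obj (F.obj H))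
    (hf : f ≫ G.map (F.map (adj.unit.app H)) = f ≫ adj.unit.app (G.obj (F.obj H))) :
    F.map f = (F.map f ≫ adj.counit.app (F.obj H)) ≫ F.map (adj.unit.app H) := by
  calc F.map f
      = F.map (f ≫ adj.unit.app (G.obj (F.obj H))) ≫ adj.counit.app (F.obj (G.obj (F.obj H))) := by
        simp
    _ = F.map (f ≫ G.map (F.map (adj.unit.app H))) ≫ adj.counit.app (F.obj (G.obj (F.obj H))) := by
        rw [hf]
    _ = (F.map f ≫ adj.counit.app (F.obj H)) ≫ F.map (adj.unit.app H) := by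
        simp

def isLimitUnitForkOfRegularMono [F.Faithful] {H : B} (h : RegularMono (adj.unit.app H)) :
    IsLimit (adj.unitFork H) :=
  Fork.IsLimit.mk' _ fun s => by
    have hs : s.ι ≫ h.left = s.ι ≫ h.right := F.map_injective <| by
      rw [F.map_comp, F.map_comp, adj.map_eq_map_comp_counit_comp_map_unit s.ι s.condition]
      simp only [Category.assoc, ← F.map_comp, Functor.id_obj, h.w]
    obtain ⟨l, hl⟩ := Fork.IsLimit.lift' h.isLimit s.ι hs
    exact ⟨l, hl, fun hm => (cancel_mono (adj.unit.app H)).1 (hm.trans hl.symm)⟩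

theorem nonempty_isLimit_unitFork_iff :
    (∀ H, Nonempty (IsLimit (adj.unitFork H))) ↔ ∀ H, Nonempty (RegularMono (adj.unit.app H)) := by
  refine ⟨fun h H => (h H).map fun t => ⟨_, _, _, _, t⟩, fun h H => ?_⟩
  have : ∀ X, Mono (adj.unit.app X) := fun X => (h X).some.mono
  have := adj.faithful_L_of_mono_unit_app
  exact (h H).map adj.isLimitUnitForkOfRegularMono

end Adjunction
end CategoryTheory

/-- (Beck's theorem, fully faithful part.) For an adjunction `F ⊣ G`, the comparison functor
to the coalgebras over the induced comonad is fully faithful iff every unit morphism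
`η_H : H ⟶ G(F(H))` is a regular monomorphism (an equalizer of some parallel pair). -/
theorem comparison_fullyFaithful_iff_unit_regularMono
    {B : Type u₁} [Category.{v₁} B] {C : Type u₂} [Category.{v₂} C]
    (F : B ⥤ C) (G : C ⥤ B) (adj : F ⊣ G) :
    ((Comonad.comparison adj).Full ∧ (Comonad.comparison adj).Faithful) ↔
      ∀ H : B, Nonempty (RegularMono (adj.unit.app H)) := by
  rw [Functor.full_and_faithful_iff_map_bijective, forall_comm,
    forall_congr' adj.comparison_map_bijective_iff, adj.nonempty_isLimit_unitFork_iff]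
end

section
/- Let T = (T, ε, δ) be a comonad on an abelian category C whose underlying endofunctor T is additive and left exact (preserves finite limits). Then the Eilenberg–Moore category Coalg(T) of T-coalgebras is an abelian category. -/
open CategoryTheory CategoryTheory.Limits

universe v u₁ u₂ u

section Transfer

variable {A : Type u₁} [Category.{v} A] {B : Type u₂} [Category.{v} B]
  [Preadditive A] [HasKernels A] [HasCokernels A] [Abelian B]
  (F : A ⥤ B) [F.PreservesZeroMorphisms]
  [PreservesFiniteLimits F] [PreservesFiniteColimits F] [F.ReflectsIsomorphisms]

noncomputable def coimIso {X Y : A} (f : X ⟶ Y) :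
    F.obj (Abelian.coimage f) ≅ Abelian.coimage (F.map f) :=
  calc F.obj (cokernel (kernel.ι f)) ≅ cokernel (F.map (kernel.ι f)) :=
        PreservesCokernel.iso F _
    _ ≅ cokernel (kernelComparison f F ≫ kernel.ι (F.map f)) :=
        cokernelIsoOfEq (by simp)
    _ ≅ cokernel (kernel.ι (F.map f)) := cokernelEpiComp _ _

noncomputable def imIso {X Y : A} (f : X ⟶ Y) :
    F.obj (Abelian.image f) ≅ Abelian.image (F.map f) :=
  calc F.obj (kernel (cokernel.π f)) ≅ kernel (F.map (cokernel.π f)) :=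
        PreservesKernel.iso F _
    _ ≅ kernel (cokernel.π (F.map f) ≫ cokernelComparison f F) :=
        kernelIsoOfEq (by simp)
    _ ≅ kernel (cokernel.π (F.map f)) := kernelCompMono _ _

lemma pi_coimIso_inv {X Y : A} (f : X ⟶ Y) :
    Abelian.coimage.π (F.map f) ≫ (coimIso F f).inv = F.map (Abelian.coimage.π f) := by
  simp [coimIso, Abelian.coimage.π, Iso.comp_inv_eq]

lemma imIso_hom_iota {X Y : A} (f : X ⟶ Y) :
    (imIso F f).hom ≫ Abelian.image.ι (F.map f) = F.map (Abelian.image.ι f) := by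
  simp [imIso, Abelian.image.ι]

lemma map_comparison {X Y : A} (f : X ⟶ Y) :
    (coimIso F f).inv ≫ F.map (Abelian.coimageImageComparison f) ≫ (imIso F f).hom =
      Abelian.coimageImageComparison (F.map f) := by
  rw [← cancel_epi (Abelian.coimage.π (F.map f)), ← cancel_mono (Abelian.image.ι (F.map f))]
  simp only [Category.assoc]
  have h1 := pi_coimIso_inv F f
  have h2 := imIso_hom_iota F f
  have h3 := Abelian.coimage_image_factorisation f
  have h4 := Abelian.coimage_image_factorisation (F.map f)
  calc Abelian.coimage.π (F.map f) ≫ (coimIso F f).inv ≫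
        F.map (Abelian.coimageImageComparison f) ≫ (imIso F f).hom ≫
          Abelian.image.ι (F.map f)
      = (Abelian.coimage.π (F.map f) ≫ (coimIso F f).inv) ≫
          F.map (Abelian.coimageImageComparison f) ≫
          ((imIso F f).hom ≫ Abelian.image.ι (F.map f)) := by simp only [Category.assoc]
    _ = F.map (Abelian.coimage.π f) ≫ F.map (Abelian.coimageImageComparison f) ≫
          F.map (Abelian.image.ι f) := by rw [h1, h2]
    _ = F.map f := by rw [← Functor.map_comp, ← Functor.map_comp, h3]
    _ = Abelian.coimage.π (F.map f) ≫ Abelian.coimageImageComparison (F.map f) ≫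
          Abelian.image.ι (F.map f) := h4.symm

include F in
lemma isIso_comparison {X Y : A} (f : X ⟶ Y) :
    IsIso (Abelian.coimageImageComparison f) := by
  have h := map_comparison F f
  have : IsIso (F.map (Abelian.coimageImageComparison f)) := by
    have : F.map (Abelian.coimageImageComparison f) =
        (coimIso F f).hom ≫ Abelian.coimageImageComparison (F.map f) ≫ (imIso F f).inv := by
      rw [← h]; simp
    rw [this]; infer_instance
  exact isIso_of_reflects_iso _ F

end Transfer

/-- If `T` is a comonad on an abelian category whose underlying endofunctor is additive and
left exact (preserves finite limits), then the Eilenberg–Moore category of `T`-coalgebras is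
abelian. -/
theorem coalgebra_abelian_of_additive_of_preservesFiniteLimits
    {C : Type u} [Category.{v} C] [Abelian C] (T : Comonad C)
    [T.toFunctor.Additive] [PreservesFiniteLimits T.toFunctor] :
    Nonempty (Abelian T.Coalgebra) := by
  have hFL : HasFiniteLimits T.Coalgebra :=
    ⟨fun J _ _ => hasLimitsOfShape_of_hasLimitsOfShape_createsLimitsOfShape (Comonad.forget T)⟩
  have hFC : HasFiniteColimits T.Coalgebra :=
    ⟨fun J _ _ => hasColimitsOfShape_of_hasColimitsOfShape_createsColimitsOfShape
      (Comonad.forget T)⟩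
  have hPL : PreservesFiniteLimits (Comonad.forget T) :=
    ⟨fun J _ _ => inferInstance⟩
  have hPC : PreservesFiniteColimits (Comonad.forget T) :=
    ⟨fun J _ _ => inferInstance⟩
  have : ∀ {X Y : T.Coalgebra} (f : X ⟶ Y), IsIso (Abelian.coimageImageComparison f) :=
    fun f => isIso_comparison (Comonad.forget T) f
  exact ⟨Abelian.ofCoimageImageComparisonIsIso⟩
end

section
/- Let B be a category in which every idempotent splits. Let f₁, f₂ : H₁ ⟶ H₂ be morphisms and π₁ : H₁ ⟶ H₁, π₂ : H₂ ⟶ H₂ idempotents (πᵢ ∘ πᵢ = πᵢ) compatible with them: f_j ∘ π₁ = π₂ ∘ f_j for j = 1, 2. Let σᵢ : Hᵢ' ⟶ Hᵢ and ρᵢ : Hᵢ ⟶ Hᵢ' be splittings of the idempotents (ρᵢ ∘ σᵢ = 𝟙_{Hᵢ'}, σᵢ ∘ ρᵢ = πᵢ), and set f_j' = ρ₂ ∘ f_j ∘ σ₁ : H₁' ⟶ H₂'. If the pair (f₁, f₂) admits a split equalizer (d : H ⟶ H₁, s : H₁ ⟶ H, t : H₂ ⟶ H₁ with f₁ ∘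 d = f₂ ∘ d, s ∘ d = 𝟙_H, t ∘ f₁ = 𝟙_{H₁}, t ∘ f₂ = d ∘ s), then the pair (f₁', f₂') also admits a split equalizer: there exist an object H' and morphisms d' : H' ⟶ H₁', s' : H₁' ⟶ H', t' : H₂' ⟶ H₁' with f₁' ∘ d' = f₂' ∘ d', s' ∘ d' = 𝟙_{H'}, t' ∘ f₁' = 𝟙_{H₁'}, and t' ∘ f₂' = d' ∘ s'. -/
open CategoryTheory

universe v u

/-- In an idempotent complete category, a split equalizer diagram for a pair of morphisms
compatible with a pair of split idempotents induces a split equalizer diagram on the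
images of the idempotents. -/
theorem split_equalizer_of_images_of_idempotents
    {B : Type u} [Category.{v} B] [IsIdempotentComplete B]
    {H₁ H₂ : B} (f₁ f₂ : H₁ ⟶ H₂)
    (π₁ : H₁ ⟶ H₁) (π₂ : H₂ ⟶ H₂) (hπ₁ : π₁ ≫ π₁ = π₁) (hπ₂ : π₂ ≫ π₂ = π₂)
    (hcomm₁ : π₁ ≫ f₁ = f₁ ≫ π₂) (hcomm₂ : π₁ ≫ f₂ = f₂ ≫ π₂)
    {H₁' H₂' : B} (σ₁ : H₁' ⟶ H₁) (ρ₁ : H₁ ⟶ H₁') (σ₂ : H₂' ⟶ H₂) (ρ₂ : H₂ ⟶ H₂')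
    (hρσ₁ : σ₁ ≫ ρ₁ = 𝟙 H₁') (hσρ₁ : ρ₁ ≫ σ₁ = π₁)
    (hρσ₂ : σ₂ ≫ ρ₂ = 𝟙 H₂') (hσρ₂ : ρ₂ ≫ σ₂ = π₂)
    {H : B} (d : H ⟶ H₁) (s : H₁ ⟶ H) (t : H₂ ⟶ H₁)
    (hcond : d ≫ f₁ = d ≫ f₂) (hds : d ≫ s = 𝟙 H)
    (ht₁ : f₁ ≫ t = 𝟙 H₁) (ht₂ : f₂ ≫ t = s ≫ d) :
    ∃ (H' : B) (d' : H' ⟶ H₁') (s' : H₁' ⟶ H') (t' : H₂' ⟶ H₁'),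
      d' ≫ (σ₁ ≫ f₁ ≫ ρ₂) = d' ≫ (σ₁ ≫ f₂ ≫ ρ₂) ∧ d' ≫ s' = 𝟙 H' ∧
      (σ₁ ≫ f₁ ≫ ρ₂) ≫ t' = 𝟙 H₁' ∧ (σ₁ ≫ f₂ ≫ ρ₂) ≫ t' = s' ≫ d' := by
  -- the induced idempotent on H
  have hee : (d ≫ π₁ ≫ s) ≫ (d ≫ π₁ ≫ s) = d ≫ π₁ ≫ s := by
    calc (d ≫ π₁ ≫ s) ≫ (d ≫ π₁ ≫ s)
        = d ≫ π₁ ≫ (f₂ ≫ t) ≫ π₁ ≫ s := by rw [ht₂]; simp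
      _ = d ≫ (π₁ ≫ f₂) ≫ t ≫ π₁ ≫ s := by simp
      _ = (d ≫ f₂) ≫ π₂ ≫ t ≫ π₁ ≫ s := by rw [hcomm₂]; simp
      _ = (d ≫ f₁) ≫ π₂ ≫ t ≫ π₁ ≫ s := by rw [hcond]
      _ = d ≫ (f₁ ≫ π₂) ≫ t ≫ π₁ ≫ s := by simp
      _ = d ≫ π₁ ≫ (f₁ ≫ t) ≫ π₁ ≫ s := by rw [← hcomm₁]; simp
      _ = d ≫ π₁ ≫ π₁ ≫ s := by rw [ht₁]; simp
      _ = d ≫ π₁ ≫ s := by rw [← Category.assoc π₁, hπ₁]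
  obtain ⟨H', i, r, hir, hri⟩ := IsIdempotentComplete.idempotents_split H (d ≫ π₁ ≫ s) hee
  have hσπ₁ : σ₁ ≫ π₁ = σ₁ := by rw [← hσρ₁, ← Category.assoc, hρσ₁, Category.id_comp]
  have hπρ₁ : π₁ ≫ ρ₁ = ρ₁ := by rw [← hσρ₁, Category.assoc, hρσ₁, Category.comp_id]
  refine ⟨H', i ≫ d ≫ ρ₁, σ₁ ≫ s ≫ r, σ₂ ≫ t ≫ ρ₁, ?_, ?_, ?_, ?_⟩
  · -- d' ≫ f₁' = d' ≫ f₂'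
    calc (i ≫ d ≫ ρ₁) ≫ σ₁ ≫ f₁ ≫ ρ₂
        = i ≫ d ≫ (ρ₁ ≫ σ₁) ≫ f₁ ≫ ρ₂ := by simp
      _ = i ≫ d ≫ (π₁ ≫ f₁) ≫ ρ₂ := by rw [hσρ₁]; simp
      _ = i ≫ (d ≫ f₁) ≫ π₂ ≫ ρ₂ := by rw [hcomm₁]; simp
      _ = i ≫ (d ≫ f₂) ≫ π₂ ≫ ρ₂ := by rw [hcond]
      _ = i ≫ d ≫ (π₁ ≫ f₂) ≫ ρ₂ := by rw [hcomm₂]; simp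
      _ = i ≫ d ≫ (ρ₁ ≫ σ₁) ≫ f₂ ≫ ρ₂ := by rw [hσρ₁]; simp
      _ = (i ≫ d ≫ ρ₁) ≫ σ₁ ≫ f₂ ≫ ρ₂ := by simp
  · -- d' ≫ s' = 𝟙
    calc (i ≫ d ≫ ρ₁) ≫ σ₁ ≫ s ≫ r
        = i ≫ d ≫ (ρ₁ ≫ σ₁) ≫ s ≫ r := by simp
      _ = i ≫ (d ≫ π₁ ≫ s) ≫ r := by rw [hσρ₁]; simp
      _ = i ≫ (r ≫ i) ≫ r := by rw [← hri]
      _ = 𝟙 H' := by rw [← Category.assoc, ← Category.assoc, hir, Category.id_comp, hir]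
  · -- f₁' ≫ t' = 𝟙
    calc (σ₁ ≫ f₁ ≫ ρ₂) ≫ σ₂ ≫ t ≫ ρ₁
        = σ₁ ≫ f₁ ≫ (ρ₂ ≫ σ₂) ≫ t ≫ ρ₁ := by simp
      _ = σ₁ ≫ (f₁ ≫ π₂) ≫ t ≫ ρ₁ := by rw [hσρ₂]; simp
      _ = (σ₁ ≫ π₁) ≫ (f₁ ≫ t) ≫ ρ₁ := by rw [← hcomm₁]; simp
      _ = σ₁ ≫ ρ₁ := by rw [hσπ₁, ht₁]; simp
      _ = 𝟙 H₁' := hρσ₁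
  · -- f₂' ≫ t' = s' ≫ d'
    have lhs : (σ₁ ≫ f₂ ≫ ρ₂) ≫ σ₂ ≫ t ≫ ρ₁ = σ₁ ≫ s ≫ d ≫ ρ₁ := by
      calc (σ₁ ≫ f₂ ≫ ρ₂) ≫ σ₂ ≫ t ≫ ρ₁
          = σ₁ ≫ f₂ ≫ (ρ₂ ≫ σ₂) ≫ t ≫ ρ₁ := by simp
        _ = σ₁ ≫ (f₂ ≫ π₂) ≫ t ≫ ρ₁ := by rw [hσρ₂]; simp
        _ = (σ₁ ≫ π₁) ≫ (f₂ ≫ t) ≫ ρ₁ := by rw [← hcomm₂]; simp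
        _ = σ₁ ≫ (s ≫ d) ≫ ρ₁ := by rw [hσπ₁, ht₂]
        _ = σ₁ ≫ s ≫ d ≫ ρ₁ := by simp
    have rhs : (σ₁ ≫ s ≫ r) ≫ i ≫ d ≫ ρ₁ = σ₁ ≫ s ≫ d ≫ ρ₁ := by
      calc (σ₁ ≫ s ≫ r) ≫ i ≫ d ≫ ρ₁
          = σ₁ ≫ s ≫ (r ≫ i) ≫ d ≫ ρ₁ := by simp
        _ = σ₁ ≫ s ≫ (d ≫ π₁ ≫ s) ≫ d ≫ ρ₁ := by rw [hri]
        _ = σ₁ ≫ s ≫ d ≫ π₁ ≫ (s ≫ d) ≫ ρ₁ := by simp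
        _ = σ₁ ≫ s ≫ d ≫ π₁ ≫ (f₂ ≫ t) ≫ ρ₁ := by rw [ht₂]
        _ = σ₁ ≫ s ≫ d ≫ (π₁ ≫ f₂) ≫ t ≫ ρ₁ := by simp
        _ = σ₁ ≫ s ≫ (d ≫ f₂) ≫ π₂ ≫ t ≫ ρ₁ := by rw [hcomm₂]; simp
        _ = σ₁ ≫ s ≫ (d ≫ f₁) ≫ π₂ ≫ t ≫ ρ₁ := by rw [hcond]
        _ = σ₁ ≫ s ≫ d ≫ (f₁ ≫ π₂) ≫ t ≫ ρ₁ := by simp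
        _ = σ₁ ≫ s ≫ d ≫ π₁ ≫ (f₁ ≫ t) ≫ ρ₁ := by rw [← hcomm₁]; simp
        _ = σ₁ ≫ s ≫ d ≫ π₁ ≫ ρ₁ := by rw [ht₁]; simp
        _ = σ₁ ≫ s ≫ d ≫ ρ₁ := by rw [hπρ₁]
    rw [lhs, rhs]
end

section
/- Let B and C be pretriangulated categories and let F ⊣ G be an adjunction with F : B ⥤ C an exact (triangulated) functor and unit η. Then F is faithful if and only if for every object H of B the unit morphism η_H : H ⟶ G(F(H)) is a split monomorphism (admits a retraction). (This is the abstract form of the paper's Lemma: a flat morphism p is SCDT iff p^* : D(S) → D(X) is faithful.) -/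
open CategoryTheory CategoryTheory.Limits CategoryTheory.Pretriangulated

universe v₁ v₂ u₁ u₂

/-! A left adjoint is faithful exactly when the unit is a monomorphism, and in a
pretriangulated category every monomorphism splits: if `f : X ⟶ Y` is mono, the first
morphism of a distinguished triangle `W ⟶ X ⟶ Y ⟶ W⟦1⟧` vanishes, so `𝟙 X` factors
through `f` (this is the `SplitMonoCategory` instance of pretriangulated categories). -/

namespace CategoryTheory.Adjunction

variable {C : Type u₁} [Category.{v₁} C] {D : Type u₂} [Category.{v₂} D]
  {L : C ⥤ D} {R : D ⥤ C}

lemma faithful_L_iff_mono_unit_app (h : L ⊣ R) : L.Faithful ↔ ∀ X, Mono (h.unit.app X) :=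
  ⟨fun _ _ => inferInstance, fun _ => h.faithful_L_of_mono_unit_app⟩

lemma faithful_L_iff_isSplitMono_unit_app [SplitMonoCategory C] (h : L ⊣ R) :
    L.Faithful ↔ ∀ X, IsSplitMono (h.unit.app X) := by
  rw [h.faithful_L_iff_mono_unit_app]
  exact forall_congr' fun X => ⟨fun _ => isSplitMono_of_mono _, fun _ => inferInstance⟩

end CategoryTheory.Adjunction

/-- For an adjunction `F ⊣ G` between pretriangulated categories with `F` exact
(triangulated), `F` is faithful iff every unit morphism `η_H : H ⟶ G(F(H))` is a split
monomorphism. -/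
theorem faithful_iff_unit_isSplitMono
    {B : Type u₁} [Category.{v₁} B] [HasZeroObject B] [HasShift B ℤ] [Preadditive B]
    [∀ n : ℤ, (shiftFunctor B n).Additive] [Pretriangulated B]
    {C : Type u₂} [Category.{v₂} C] [HasZeroObject C] [HasShift C ℤ] [Preadditive C]
    [∀ n : ℤ, (shiftFunctor C n).Additive] [Pretriangulated C]
    (F : B ⥤ C) [F.CommShift ℤ] [F.IsTriangulated] (G : C ⥤ B) (adj : F ⊣ G) :
    F.Faithful ↔ ∀ H : B, IsSplitMono (adj.unit.app H) :=
  adj.faithful_L_iff_isSplitMono_unit_app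
end

section
/- Let B and C be preadditive categories admitting all small coproducts, and let F ⊣ G be an adjunction with F : B ⥤ C additive and preserving small coproducts. Suppose the unit η : 𝟭_B ⟶ F ⋙ G admits a natural retraction σ : F ⋙ G ⟶ 𝟭_B with η ≫ σ = 𝟙. Let H be an object of B such that F(H) is compact in C, i.e., for every small family (c_i)_{i ∈ ι} of objects of C the canonical homomorphism from the direct sum ⊕_{i} Hom_C(F(H), c_i) (finitely supported families) to Hom_C(F(H), ∐_i c_i) is bijective. Then H is compact in B: for every small family (b_i)_{i ∈ ι} of objects of B the canonical homomorphism ⊕_i Hom_B(H, b_i) → Hom_B(H, ∐_i b_i) is bijective. (This is the key step in the paper's proof that under cohomological descent the comparison functor preserves and reflects perfect complexes.) -/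
open CategoryTheory CategoryTheory.Limits

universe w v₁ v₂ u₁ u₂ u

/-- The canonical map `⊕ᵢ Hom(X, cᵢ) → Hom(X, ∐ᵢ cᵢ)` in a preadditive category with small
coproducts, sending a finitely supported family `(φᵢ)` to the sum of the composites of the
`φᵢ` with the coproduct inclusions. -/
noncomputable def canonicalHomToCoproduct
    {D : Type u} [Category.{v₁} D] [Preadditive D] [HasCoproducts.{w} D]
    (X : D) {ι : Type w} (c : ι → D) :
    (Π₀ i, (X ⟶ c i)) →+ (X ⟶ ∐ c) :=
  letI := Classical.decEq ι
  DFinsupp.sumAddHom fun i =>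
    { toFun := fun φ => φ ≫ Sigma.ι c i
      map_zero' := by simp
      map_add' := fun _ _ => by simp [Preadditive.add_comp] }

/-- An object `X` of a preadditive category with small coproducts is compact if the canonical
map `⊕ᵢ Hom(X, cᵢ) → Hom(X, ∐ᵢ cᵢ)` is bijective for every small family `(cᵢ)`. -/
def IsCompactObject {D : Type u} [Category.{v₁} D] [Preadditive D] [HasCoproducts.{w} D]
    (X : D) : Prop :=
  ∀ (ι : Type w) (c : ι → D), Function.Bijective (canonicalHomToCoproduct X c)

lemma canonicalHomToCoproduct_single
    {D : Type u} [Category.{v₁} D] [Preadditive D] [HasCoproducts.{w} D]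
    (X : D) {ι : Type w} [DecidableEq ι] (c : ι → D) (i : ι) (x : X ⟶ c i) :
    canonicalHomToCoproduct X c (DFinsupp.single i x) = x ≫ Sigma.ι c i := by
  unfold canonicalHomToCoproduct
  exact DFinsupp.sumAddHom_single
    (fun i => { toFun := fun φ => φ ≫ Sigma.ι c i
                map_zero' := by simp
                map_add' := fun _ _ => by simp [Preadditive.add_comp] }) i x

/-- Let `F ⊣ G` be an adjunction between preadditive categories with small coproducts, where
`F` is additive and preserves small coproducts, and suppose the unit admits a natural
retraction. If `F.obj H` is compact then `H` is compact. -/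
theorem compact_of_map_compact_of_unit_split
    {B : Type u₁} [Category.{v₁} B] [Preadditive B] [HasCoproducts.{w} B]
    {C : Type u₂} [Category.{v₂} C] [Preadditive C] [HasCoproducts.{w} C]
    (F : B ⥤ C) [F.Additive] (G : C ⥤ B) (adj : F ⊣ G)
    (hpres : ∀ ι : Type w, PreservesColimitsOfShape (Discrete ι) F)
    (σ : F ⋙ G ⟶ 𝟭 B) (hσ : adj.unit ≫ σ = 𝟙 (𝟭 B))
    (H : B) (hcpt : IsCompactObject.{w} (F.obj H)) :
    IsCompactObject.{w} H := by
  haveI : G.Additive := by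
    constructor
    intro X Y f g
    apply (adj.homEquiv (G.obj X) Y).symm.injective
    simp only [Adjunction.homEquiv_counit, Functor.map_add, Preadditive.add_comp,
      adj.counit_naturality, Preadditive.comp_add]
  intro ι b
  letI := Classical.decEq ι
  haveI := hpres ι
  set sc : (∐ fun i => F.obj (b i)) ⟶ F.obj (∐ b) := sigmaComparison F b with hsc
  -- bundled maps
  let Fh : ∀ i, (H ⟶ b i) →+ (F.obj H ⟶ F.obj (b i)) := fun i =>
    AddMonoidHom.mk' (fun x => F.map x) (fun _ _ => F.map_add)
  let χ : ∀ i, (F.obj H ⟶ F.obj (b i)) →+ (H ⟶ b i) := fun i =>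
    AddMonoidHom.mk' (fun x => adj.unit.app H ≫ G.map x ≫ σ.app (b i)) (by
      intro x y
      simp [G.map_add, Preadditive.add_comp, Preadditive.comp_add])
  have key1 : ∀ φ : Π₀ i, (H ⟶ b i),
      F.map (canonicalHomToCoproduct H b φ) =
      canonicalHomToCoproduct (F.obj H) (fun i => F.obj (b i))
        (DFinsupp.mapRange.addMonoidHom Fh φ) ≫ sc := by
    suffices h : AddMonoidHom.comp
        (AddMonoidHom.mk' (fun g : (H ⟶ ∐ b) => F.map g) (fun _ _ => F.map_add))
        (canonicalHomToCoproduct H b)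
        = AddMonoidHom.comp
          (AddMonoidHom.mk' (fun g : (F.obj H ⟶ ∐ fun i => F.obj (b i)) => g ≫ sc)
            (fun _ _ => Preadditive.add_comp _ _ _ _ _ _))
          ((canonicalHomToCoproduct (F.obj H) (fun i => F.obj (b i))).comp
            (DFinsupp.mapRange.addMonoidHom Fh)) by
      intro φ
      exact DFunLike.congr_fun h φ
    refine DFinsupp.addHom_ext fun i x => ?_
    simp only [AddMonoidHom.comp_apply, AddMonoidHom.mk'_apply,
      DFinsupp.mapRange.addMonoidHom_apply, DFinsupp.mapRange_single,
      canonicalHomToCoproduct_single, F.map_comp, AddMonoidHom.mk'_apply]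
    rw [Category.assoc, hsc, ι_comp_sigmaComparison]
    simp [Fh]
  have key2 : ∀ ψ : Π₀ i, (F.obj H ⟶ F.obj (b i)),
      canonicalHomToCoproduct H b (DFinsupp.mapRange.addMonoidHom χ ψ) =
      adj.unit.app H ≫
        G.map (canonicalHomToCoproduct (F.obj H) (fun i => F.obj (b i)) ψ ≫ sc) ≫
        σ.app (∐ b) := by
    suffices h : AddMonoidHom.comp (canonicalHomToCoproduct H b)
        (DFinsupp.mapRange.addMonoidHom χ)
        = AddMonoidHom.comp
          (AddMonoidHom.mk'
            (fun g : (F.obj H ⟶ ∐ fun i => F.obj (b i)) =>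
              adj.unit.app H ≫ G.map (g ≫ sc) ≫ σ.app (∐ b))
            (by
              intro x y
              simp [Preadditive.add_comp, G.map_add, Preadditive.comp_add]))
          (canonicalHomToCoproduct (F.obj H) (fun i => F.obj (b i))) by
      intro ψ
      exact DFunLike.congr_fun h ψ
    refine DFinsupp.addHom_ext fun i x => ?_
    rw [AddMonoidHom.comp_apply, DFinsupp.mapRange.addMonoidHom_apply,
      DFinsupp.mapRange_single, canonicalHomToCoproduct_single]
    show (adj.unit.app H ≫ G.map x ≫ σ.app (b i)) ≫ Sigma.ι b i =
      adj.unit.app H ≫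
        G.map ((canonicalHomToCoproduct (F.obj H) (fun i => F.obj (b i)))
          (DFinsupp.single i x) ≫ sc) ≫ σ.app (∐ b)
    rw [canonicalHomToCoproduct_single, hsc]
    simp only [Category.assoc, ι_comp_sigmaComparison]
    rw [G.map_comp]
    have hnat := σ.naturality (Sigma.ι b i)
    simp only [Functor.comp_map, Functor.id_map] at hnat
    simp [χ, hnat]
  have hσapp : ∀ X : B, adj.unit.app X ≫ σ.app X = 𝟙 X := fun X =>
    congrArg (fun τ => NatTrans.app τ X) hσ
  have retract : ∀ {X Y : B} (g : X ⟶ Y), adj.unit.app X ≫ G.map (F.map g) ≫ σ.app Y = g := by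
    intro X Y g
    have := adj.unit.naturality g
    simp only [Functor.id_map, Functor.comp_map] at this
    rw [← Category.assoc, ← this, Category.assoc, hσapp]
    simp
  constructor
  · rw [injective_iff_map_eq_zero]
    intro φ hφ
    have h1 : canonicalHomToCoproduct (F.obj H) (fun i => F.obj (b i))
        (DFinsupp.mapRange.addMonoidHom Fh φ) ≫ sc = 0 := by
      rw [← key1, hφ, F.map_zero]
    have h2 : canonicalHomToCoproduct (F.obj H) (fun i => F.obj (b i))
        (DFinsupp.mapRange.addMonoidHom Fh φ) = 0 := by
      rw [← cancel_mono sc, h1, Limits.zero_comp]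
    have h3 : DFinsupp.mapRange.addMonoidHom Fh φ = 0 := by
      apply (hcpt ι (fun i => F.obj (b i))).1
      rw [h2, map_zero]
    ext i
    have h4 : F.map (φ i) = 0 := by
      have := congrFun (congrArg DFunLike.coe h3) i
      simpa [Fh] using this
    have := retract (φ i)
    rw [h4, G.map_zero, Limits.zero_comp, Limits.comp_zero] at this
    simp [← this]
  · intro f
    obtain ⟨ψ, hψ⟩ := (hcpt ι (fun i => F.obj (b i))).2 (F.map f ≫ inv sc)
    refine ⟨DFinsupp.mapRange.addMonoidHom χ ψ, ?_⟩
    rw [key2, hψ, Category.assoc, IsIso.inv_hom_id, Category.comp_id, retract]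
end

section
/- Let G be a finite group and k a field. Let ι be the morphism in Rep k G from the trivial representation of G on k to the left regular representation of G on the monoid algebra k[G] (with G acting by left multiplication), sending 1 to the sum ∑_{g ∈ G} g. Then ι admits a retraction in the category Rep k G (i.e., there is a G-equivariant k-linear map r : k[G] → k with r ∘ ι = id) if and only if every monomorphism in Rep k G is a split monomorphism. (This is the finite-group instance of the paper's Proposition characterizing linearly reductive groups: G is linearly reductive iff the natural homomorphism k → k[G] is an embedding of a direct summand in the category of representations.) -/
open CategoryTheory Finsupp

universe u

variable (k G : Type u) [Field k] [Group G] [Fintype G]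

/-- The morphism in `Rep k G` from the trivial representation `k` to the left regular
representation `k[G]` sending `1` to `∑ g, g`. -/
noncomputable def sumOfGroupElements : Rep.trivial k G k ⟶ Rep.leftRegular k G :=
  Rep.ofHom
  { toLinearMap :=
      LinearMap.toSpanSingleton k (MonoidAlgebra k G) (∑ g : G, MonoidAlgebra.single g (1 : k))
    isIntertwining' := fun g => by
      refine LinearMap.ext fun (r : k) => ?_
      show (LinearMap.toSpanSingleton k (MonoidAlgebra k G) _) r =
        (Representation.ofMulAction k G G g) ((LinearMap.toSpanSingleton k (MonoidAlgebra k G) _) r)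
      simp only [LinearMap.toSpanSingleton_apply, map_smul]
      congr 1
      rw [map_sum]
      simp only [Representation.ofMulAction_single]
      exact (Fintype.sum_bijective (fun x : G => (show G from g) • x)
        (MulAction.bijective (show G from g)) _ _ (fun x => rfl)).symm }

/-!
If `r` is a retraction of `ι : k → k[G]`, equivariance into the trivial representation forces
`r (single g 1) = r (single 1 1)` for all `g`, so `1 = r (∑ g, g) = |G| • r (single 1 1)`. Thus
`|G|` is invertible in `k` and Maschke's theorem splits every monomorphism. Conversely `ι` is
injective, hence a monomorphism, and a splitting of it is the retraction.
-/

universe v w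

instance MonoidAlgebra.splitMonoCategory_moduleCat {R M : Type*} [Field R] [Group M] [Finite M]
    [NeZero (Nat.card M : R)] : SplitMonoCategory (ModuleCat (MonoidAlgebra R M)) where
  isSplitMono_of_mono f _ := by
    obtain ⟨g, hg⟩ := MonoidAlgebra.exists_leftInverse_of_injective f.hom
      ((ModuleCat.mono_iff_ker_eq_bot f).mp ‹_›)
    exact IsSplitMono.mk' ⟨ModuleCat.ofHom g, ModuleCat.hom_ext hg⟩

instance Rep.splitMonoCategory {R : Type u} {M : Type v} [Field R] [Group M] [Finite M]
    [NeZero (Nat.card M : R)] : SplitMonoCategory (Rep.{w} R M) :=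
  Functor.splitMonoCategoryImpOfIsEquivalence Rep.ofModuleMonoidAlgebra

theorem Rep.hom_leftRegular_trivial_single {R : Type u} {M : Type v} {V : Type (max u v)} [Ring R]
    [Monoid M] [AddCommGroup V] [Module R V] (f : Rep.leftRegular R M ⟶ Rep.trivial R M V)
    (m : M) : f.hom (MonoidAlgebra.single m 1) = f.hom (MonoidAlgebra.single 1 1) := by
  simpa [Representation.ofMulAction_single] using Rep.hom_comm_apply f m (MonoidAlgebra.single 1 1)

theorem MonoidAlgebra.sum_single_one_ne_zero {R M : Type*} [Semiring R] [Nontrivial R]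
    [Fintype M] [One M] : ∑ m : M, MonoidAlgebra.single m (1 : R) ≠ 0 := by
  classical
  intro h
  simpa [MonoidAlgebra.coeff_sum, MonoidAlgebra.coeff_single, Finsupp.single_apply] using
    congr(MonoidAlgebra.coeff $h 1)

@[simp]
theorem sumOfGroupElements_hom_apply (a : k) :
    (sumOfGroupElements k G).hom a = a • ∑ g : G, MonoidAlgebra.single g (1 : k) :=
  rfl

theorem mono_sumOfGroupElements : Mono (sumOfGroupElements k G) := by
  rw [Rep.mono_iff_injective]
  intro a b hab
  rw [sumOfGroupElements_hom_apply, sumOfGroupElements_hom_apply] at hab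
  exact smul_left_injective k MonoidAlgebra.sum_single_one_ne_zero hab

theorem natCard_ne_zero_of_sumOfGroupElements_comp_eq_id
    {r : Rep.leftRegular k G ⟶ Rep.trivial k G k}
    (hr : sumOfGroupElements k G ≫ r = 𝟙 _) : (Nat.card G : k) ≠ 0 := by
  have h : r.hom ((sumOfGroupElements k G).hom 1) = 1 := congr($(hr).hom 1)
  rw [sumOfGroupElements_hom_apply, one_smul, map_sum,
    Finset.sum_congr rfl fun g _ => Rep.hom_leftRegular_trivial_single r g, Finset.sum_const,
    Finset.card_univ, ← Nat.card_eq_fintype_card, nsmul_eq_mul] at h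
  exact left_ne_zero_of_mul_eq_one h

/-- For a finite group `G` and a field `k`, the embedding of the trivial representation into
the left regular representation (sending `1` to `∑ g, g`) admits a retraction in `Rep k G`
iff every monomorphism in `Rep k G` splits. -/
theorem sumOfGroupElements_retraction_iff_mono_split :
    (∃ r : Rep.leftRegular k G ⟶ Rep.trivial k G k,
        sumOfGroupElements k G ≫ r = 𝟙 (Rep.trivial k G k)) ↔
      ∀ {X Y : Rep.{u} k G} (f : X ⟶ Y), Mono f → IsSplitMono f := by
  constructor
  · rintro ⟨r, hr⟩ X Y f hf
    have : NeZero (Nat.card G : k) := ⟨natCard_ne_zero_of_sumOfGroupElements_comp_eq_id k G hr⟩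
    exact isSplitMono_of_mono f
  · intro h
    have := h _ (mono_sumOfGroupElements k G)
    exact ⟨retraction (sumOfGroupElements k G), IsSplitMono.id _⟩
end
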